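/- If G is a signed graph whose underlying unsigned graph is unicyclic (contains exactly one cycle), then a_sd(G) ≤ 2. Moreover, a_sd(G) = 2 if and only if the underlying graph is a cycle and all edges of G are negative. -/

import Mathlib

open Set

variable {V : Type*}

/-- Number of `G`-neighbors of `v` inside the set `S`. -/
noncomputable def ndegOn (G : SimpleGraph V) (S : Set V) (v : V) : ℕ := (S ∩ {u | G.Adj v u}).ncard

/-- Total number of `G`-neighbors of `v`. -/
noncomputable def ndeg (G : SimpleGraph V) (v : V) : ℕ := {u | G.Adj v u}.ncard

/-- `S` is a defensive alliance in the signed graph `(V, Gp, Gn)`. -/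
def IsDefAlliance (Gp Gn : SimpleGraph V) (S : Set V) : Prop :=
  S.Nonempty ∧ ∀ v ∈ S,
    ndegOn Gn S v ≤ ndegOn Gp S v + 1 ∧ ndegOn Gn Sᶜ v ≤ ndegOn Gp S v + 1

/-- Defensive alliance number: minimum size of a defensive alliance. -/
noncomputable def asd (Gp Gn : SimpleGraph V) : ℕ :=
  sInf {n | ∃ S : Set V, IsDefAlliance Gp Gn S ∧ S.ncard = n}

/-! A vertex with at most one negative edge is a defensive alliance on its own, so
`a_sd ≤ 1` unless every vertex has at least two negative edges. In that case the underlying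
graph has minimum degree two; every component of such a graph contains a cycle, so uniqueness of
the cycle makes it connected, and deleting an edge of the cycle leaves a spanning tree. Hence it
has as many edges as vertices, which together with the degree bound forces it to be `2`-regular,
and all its edges are negative. Then no singleton is an alliance, while the two ends of any
edge form one, so `a_sd = 2`. -/

namespace SimpleGraph

def IsUnicyclic (G : SimpleGraph V) : Prop :=
  ∃! s : Set (Sym2 V), ∃ (v : V) (w : G.Walk v v), w.IsCycle ∧ s = {e | e ∈ w.edges}

variable {G : SimpleGraph V}

theorem exists_isCycle_reachable_of_two_le_ncard_neighborSet [Finite V]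
    (hdeg : ∀ v, 2 ≤ (G.neighborSet v).ncard) (u : V) :
    ∃ (v : V) (c : G.Walk v v), c.IsCycle ∧ G.Reachable u v := by
  classical
  have := Fintype.ofFinite V
  have hfin : {n | ∃ (x : V) (p : G.Walk x u), p.IsPath ∧ p.length = n}.Finite :=
    (Set.finite_lt_nat (Fintype.card V)).subset fun n ⟨_, _, hp, hn⟩ => hn ▸ hp.length_lt
  obtain ⟨_, ⟨x, p, hp, rfl⟩, hmax⟩ := hfin.exists_maximal ⟨0, u, .nil, .nil, rfl⟩
  -- `x` has a neighbour `w` off the first edge of the longest path `p`; it cannot extend `p`,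
  -- so it lies on `p` and closes a cycle.
  obtain ⟨w, hxw, hw⟩ := (G.neighborSet x).exists_ne_of_one_lt_ncard (hdeg x) p.snd
  have hxw_edges : s(x, w) ∉ p.edges := fun h => hw (hp.eq_snd_of_mem_edges h)
  by_cases hws : w ∈ p.support
  · refine ⟨w, .cons (G.adj_symm hxw) (p.takeUntil w hws), ?_,
      ⟨(p.dropUntil w hws).reverse⟩⟩
    rw [Walk.cons_isCycle_iff]
    refine ⟨hp.takeUntil hws, fun h => hxw_edges ?_⟩
    exact Sym2.eq_swap ▸ p.edges_takeUntil_subset_edges hws h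
  · have := hmax ⟨w, .cons (G.adj_symm hxw) p, hp.cons hws, rfl⟩
    simp at this

namespace IsUnicyclic

variable (h : G.IsUnicyclic)
include h

theorem mem_edges_iff {u v : V} {c : G.Walk u u} {c' : G.Walk v v} (hc : c.IsCycle)
    (hc' : c'.IsCycle) {e : Sym2 V} : e ∈ c.edges ↔ e ∈ c'.edges :=
  Set.ext_iff.mp (h.unique ⟨u, c, hc, rfl⟩ ⟨v, c', hc', rfl⟩) e

theorem reachable_of_isCycle {u v : V} {c : G.Walk u u} {c' : G.Walk v v} (hc : c.IsCycle)
    (hc' : c'.IsCycle) : G.Reachable u v := by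
  classical
  have hu : u ∈ c'.support := c'.fst_mem_support_of_mem_edges
    ((h.mem_edges_iff hc hc').mp (c.mk_start_snd_mem_edges hc.not_nil))
  exact ⟨c'.dropUntil u hu⟩

theorem connected [Finite V] (hdeg : ∀ v, 2 ≤ (G.neighborSet v).ncard) : G.Connected := by
  obtain ⟨_, v, c, hc, -⟩ := h.exists
  refine (connected_iff_exists_forall_reachable G).2 ⟨v, fun u => ?_⟩
  obtain ⟨w, c', hc', huw⟩ := exists_isCycle_reachable_of_two_le_ncard_neighborSet hdeg u
  exact (huw.trans (h.reachable_of_isCycle hc' hc)).symm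

theorem isAcyclic_deleteEdges {v : V} {c : G.Walk v v} (hc : c.IsCycle) {e : Sym2 V}
    (he : e ∈ c.edges) : (G.deleteEdges {e}).IsAcyclic := by
  intro u c' hc'
  have hle := G.deleteEdges_le {e}
  have he' : e ∈ c'.edges := by
    simpa [Walk.edges_mapLe_eq_edges] using (h.mem_edges_iff hc (hc'.mapLe hle)).mp he
  have := c'.edges_subset_edgeSet he'
  rw [edgeSet_deleteEdges] at this
  exact this.2 rfl

theorem card_edgeSet [Finite V] (hconn : G.Connected) : Nat.card G.edgeSet = Nat.card V := by
  obtain ⟨_, v, c, hc, -⟩ := h.exists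
  have he := c.mk_start_snd_mem_edges hc.not_nil
  have htree : (G.deleteEdges {s(v, c.snd)}).IsTree :=
    ⟨hconn.connected_delete_edge_of_not_isBridge fun hb => hb.notMem_edges_of_isCycle hc he,
      h.isAcyclic_deleteEdges hc he⟩
  have hcard := (isTree_iff_connected_and_card.mp htree).2
  rwa [edgeSet_deleteEdges, Nat.card_coe_set_eq,
    Set.ncard_sdiff_singleton_add_one (c.edges_subset_edgeSet he), ← Nat.card_coe_set_eq] at hcard

end IsUnicyclic

theorem ncard_neighborSet_eq_two_of_card_edgeSet_eq [Finite V]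
    (hE : Nat.card G.edgeSet = Nat.card V) (hdeg : ∀ v, 2 ≤ (G.neighborSet v).ncard) (v : V) :
    (G.neighborSet v).ncard = 2 := by
  classical
  have := Fintype.ofFinite V
  have hncard : ∀ v, (G.neighborSet v).ncard = G.degree v := fun v => by
    rw [← card_neighborSet_eq_degree, ← Nat.card_eq_fintype_card, Nat.card_coe_set_eq]
  have hsum := G.sum_degrees_eq_twice_card_edges
  rw [edgeFinset_card, ← Nat.card_eq_fintype_card, hE, Nat.card_eq_fintype_card] at hsum
  by_contra hne
  have hlt : ∑ _v : V, 2 < ∑ v, G.degree v :=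
    Finset.sum_lt_sum (fun v _ => hncard v ▸ hdeg v)
      ⟨v, Finset.mem_univ v, hncard v ▸ lt_of_le_of_ne (hdeg v) (Ne.symm hne)⟩
  simp only [Finset.sum_const, Finset.card_univ, smul_eq_mul] at hlt
  omega

end SimpleGraph

section SignedGraph

variable {Gp Gn : SimpleGraph V}

theorem ndeg_mono [Finite V] {G H : SimpleGraph V} (hle : G ≤ H) (v : V) :
    ndeg G v ≤ ndeg H v :=
  ncard_le_ncard fun _ hu => hle hu

theorem ndeg_sup_of_disjoint [Finite V] (hdisj : Disjoint Gp Gn) (v : V) :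
    ndeg (Gp ⊔ Gn) v = ndeg Gp v + ndeg Gn v :=
  ncard_union_eq <| Set.disjoint_left.mpr fun u hp hn =>
    Set.disjoint_left.mp (SimpleGraph.disjoint_edgeSet.mpr hdisj)
      (show s(v, u) ∈ Gp.edgeSet from hp) hn

theorem eq_bot_of_ndeg_sup_le [Finite V] (hdisj : Disjoint Gp Gn)
    (hle : ∀ v, ndeg (Gp ⊔ Gn) v ≤ ndeg Gn v) : Gp = ⊥ := by
  ext a b
  refine iff_of_false (fun hab => ?_) id
  have hpos : 0 < ndeg Gp a := (ncard_pos).mpr ⟨b, hab⟩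
  have := hle a
  rw [ndeg_sup_of_disjoint hdisj] at this
  omega

theorem ndegOn_add_ndegOn_compl [Finite V] (G : SimpleGraph V) (S : Set V) (v : V) :
    ndegOn G S v + ndegOn G Sᶜ v = ndeg G v := by
  rw [ndegOn, ndegOn, inter_comm, inter_comm Sᶜ, ← sdiff_eq, ndeg,
    ncard_inter_add_ncard_sdiff_eq_ncard]

theorem ndegOn_singleton_self (G : SimpleGraph V) (v : V) : ndegOn G {v} v = 0 := by
  simp [ndegOn]

theorem ndegOn_pair_of_adj {G : SimpleGraph V} {a b : V} (hab : G.Adj a b) :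
    ndegOn G {a, b} a = 1 := by
  have hset : {a, b} ∩ {u | G.Adj a u} = {b} := by
    ext x
    simp only [mem_inter_iff, mem_insert_iff, mem_singleton_iff, mem_ofPred_eq]
    constructor
    · rintro ⟨rfl | rfl, h⟩
      · exact (G.irrefl h).elim
      · rfl
    · rintro rfl
      exact ⟨Or.inr rfl, hab⟩
  rw [ndegOn, hset, ncard_singleton]

theorem isDefAlliance_singleton_iff [Finite V] {v : V} :
    IsDefAlliance Gp Gn {v} ↔ ndeg Gn v ≤ 1 := by
  have := ndegOn_add_ndegOn_compl Gn {v} v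
  simp only [IsDefAlliance, singleton_nonempty, mem_singleton_iff, forall_eq,
    ndegOn_singleton_self, true_and] at this ⊢
  omega

theorem isDefAlliance_pair [Finite V] {v u : V} (hvu : Gn.Adj v u) (hv : ndeg Gn v ≤ 2)
    (hu : ndeg Gn u ≤ 2) : IsDefAlliance Gp Gn {v, u} := by
  have hdefend : ∀ a b : V, Gn.Adj a b → ndeg Gn a ≤ 2 →
      ndegOn Gn {a, b} a ≤ ndegOn Gp {a, b} a + 1 ∧
        ndegOn Gn ({a, b} : Set V)ᶜ a ≤ ndegOn Gp {a, b} a + 1 := by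
    intro a b hab ha
    have := ndegOn_add_ndegOn_compl Gn {a, b} a
    rw [ndegOn_pair_of_adj hab] at this ⊢
    omega
  refine ⟨insert_nonempty v {u}, ?_⟩
  rintro x (rfl | rfl)
  · exact hdefend _ _ hvu hv
  · rw [pair_comm]
    exact hdefend _ _ hvu.symm hu

theorem asd_le_ncard {S : Set V} (hS : IsDefAlliance Gp Gn S) : asd Gp Gn ≤ S.ncard :=
  Nat.sInf_le ⟨S, hS, rfl⟩

theorem two_le_ncard_of_isDefAlliance [Finite V] (hdeg : ∀ v, 2 ≤ ndeg Gn v) {S : Set V}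
    (hS : IsDefAlliance Gp Gn S) : 2 ≤ S.ncard := by
  by_contra! hlt
  have hpos : 0 < S.ncard := (ncard_pos).mpr hS.1
  obtain ⟨v, rfl⟩ := ncard_eq_one.mp (show S.ncard = 1 by omega)
  have := isDefAlliance_singleton_iff.mp hS
  have := hdeg v
  omega

theorem asd_eq_two_of_forall_ndeg_eq_two [Finite V] [Nonempty V] (hdeg : ∀ v, ndeg Gn v = 2) :
    asd Gp Gn = 2 := by
  obtain ⟨v⟩ := ‹Nonempty V›
  have hpos : 0 < ndeg Gn v := by rw [hdeg v]; omega
  obtain ⟨u, hvu⟩ := (ncard_pos).mp hpos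
  have hpair : IsDefAlliance Gp Gn {v, u} := isDefAlliance_pair hvu (hdeg v).le (hdeg u).le
  refine le_antisymm ((asd_le_ncard hpair).trans (ncard_pair (Gn.ne_of_adj hvu)).le) ?_
  refine le_csInf ⟨_, _, hpair, rfl⟩ ?_
  rintro _ ⟨S, hS, rfl⟩
  exact two_le_ncard_of_isDefAlliance (fun v => (hdeg v).ge) hS

end SignedGraph

theorem stmt6 [Fintype V] (Gp Gn : SimpleGraph V) (hdisj : Disjoint Gp Gn)
    (huni : ∃! s : Set (Sym2 V), ∃ (v : V) (w : (Gp ⊔ Gn).Walk v v),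
      w.IsCycle ∧ s = {e | e ∈ w.edges}) :
    asd Gp Gn ≤ 2 ∧
      (asd Gp Gn = 2 ↔
        ((Gp ⊔ Gn).Connected ∧ (∀ v : V, ndeg (Gp ⊔ Gn) v = 2) ∧ Gp = ⊥)) := by
  have hG : (Gp ⊔ Gn).IsUnicyclic := huni
  by_cases hleaf : ∃ v, ndeg Gn v ≤ 1
  · obtain ⟨v, hv⟩ := hleaf
    have hle : asd Gp Gn ≤ 1 :=
      (asd_le_ncard (isDefAlliance_singleton_iff.mpr hv)).trans_eq (ncard_singleton v)
    refine ⟨by omega, iff_of_false (by omega) ?_⟩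
    rintro ⟨-, hreg, rfl⟩
    have := hreg v
    rw [bot_sup_eq] at this
    omega
  push Not at hleaf
  have hdeg : ∀ v, 2 ≤ ndeg (Gp ⊔ Gn) v := fun v =>
    (hleaf v).trans_le (ndeg_mono le_sup_right v)
  have hconn := hG.connected hdeg
  have hreg : ∀ v, ndeg (Gp ⊔ Gn) v = 2 :=
    SimpleGraph.ncard_neighborSet_eq_two_of_card_edgeSet_eq (hG.card_edgeSet hconn) hdeg
  have hGp : Gp = ⊥ := eq_bot_of_ndeg_sup_le hdisj fun v => (hreg v).trans_le (hleaf v)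
  have hGn : ∀ v, ndeg Gn v = 2 := by simpa [hGp] using hreg
  have := hconn.nonempty
  have htwo : asd Gp Gn = 2 := asd_eq_two_of_forall_ndeg_eq_two hGn
  exact ⟨htwo.le, iff_of_true htwo ⟨hconn, hreg, hGp⟩⟩
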